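/- Let N ≥ 1 and 1 ≤ N' ≤ N. Let p_1,...,p_{N+1}, q_1,...,q_{N+1} be reals with 0 ≤ p_1 ≤ ... ≤ p_{N+1}, 0 ≤ q_1 ≤ ... ≤ q_{N+1}, and 0 ≤ p_1 − q_1 ≤ ... ≤ p_{N+1} − q_{N+1}. Let k, l ≥ 0, set r_j = k·p_j + l·q_j, and let α, β be reals with 0 ≤ α ≤ k and −k−l+α ≤ β ≤ α. Then max over (σ_1,...,σ_{N'}) ∈ {−1,1}^{N'} of [Σ_{j=1}^{N'} σ_j·((k−α)·p_j + (l+β)·q_j) − Σ_{1≤j<j'≤N'} σ_j·σ_{j'}·r_j] ≥ max over σ ∈ {−1,1}^{N'} of [Σ_{j=1}^{N'} σ_j·((k+α)·p_j + (l−β)·q_j) − Σ_{1≤j<j'≤N'} σ_j·σ_{j'}·r_j] − 2·α·p_{N+1} + 2·β·q_{N+1}. -/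

import Mathlib

/-! With `c j = α p_j − β q_j`, the two maxima are those for the linear terms `r + c` and
`r − c`, and `c` is nonnegative and nondecreasing. Fixing the last sign `σ_n = s` turns the
maximum over `n + 1` signs for `m r ± c` into one over `n` signs for `(m − s) r ± c`, so
induction on `n` bounds the gap between `m r + c` and `m r − c` by `2 min(m, n) C` for any
upper bound `C` of `c`; the base case `m = 0` is the symmetry `σ ↦ −σ`. -/

open Finset

/-- Maximum over all sign choices `(σ_1,...,σ_N) ∈ {−1,1}^N` of
`Σ_j σ_j a_j − Σ_{j<j'} σ_j σ_{j'} r_j`. -/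
noncomputable def sigMax (N : ℕ) (a r : Fin N → ℝ) : ℝ :=
  Finset.univ.sup' Finset.univ_nonempty fun σ : Fin N → Bool =>
    (∑ j, (if σ j then (1 : ℝ) else -1) * a j) -
      ∑ j, ∑ j', if j < j' then
        (if σ j then (1 : ℝ) else -1) * (if σ j' then (1 : ℝ) else -1) * r j else 0

def boolSign (b : Bool) : ℝ := if b then 1 else -1

@[simp] lemma boolSign_true : boolSign true = 1 := rfl

@[simp] lemma boolSign_false : boolSign false = -1 := rfl

lemma boolSign_not (b : Bool) : boolSign (!b) = -boolSign b := by
  cases b <;> simp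

noncomputable def sigBody {n : ℕ} (a r : Fin n → ℝ) (σ : Fin n → Bool) : ℝ :=
  (∑ j, boolSign (σ j) * a j) -
    ∑ j, ∑ j', if j < j' then boolSign (σ j) * boolSign (σ j') * r j else 0

lemma sigMax_le_iff {n : ℕ} {a r : Fin n → ℝ} {x : ℝ} :
    sigMax n a r ≤ x ↔ ∀ σ, sigBody a r σ ≤ x := by
  simp only [sigMax, sup'_le_iff, mem_univ, true_implies]
  rfl

lemma sigBody_le_sigMax {n : ℕ} (a r : Fin n → ℝ) (σ : Fin n → Bool) :
    sigBody a r σ ≤ sigMax n a r :=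
  sigMax_le_iff.1 le_rfl σ

lemma sigMax_zero (a r : Fin 0 → ℝ) : sigMax 0 a r = 0 := by
  refine le_antisymm (sigMax_le_iff.2 fun σ => by simp [sigBody]) ?_
  simpa [sigBody] using sigBody_le_sigMax a r Fin.elim0

lemma sigBody_neg {n : ℕ} (a r : Fin n → ℝ) (σ : Fin n → Bool) :
    sigBody (fun j => -a j) r σ = sigBody a r (fun j => !σ j) := by
  simp only [sigBody, boolSign_not, mul_neg, neg_mul, neg_neg]

lemma sigMax_neg {n : ℕ} (a r : Fin n → ℝ) : sigMax n (fun j => -a j) r = sigMax n a r := by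
  refine le_antisymm (sigMax_le_iff.2 fun σ => ?_) (sigMax_le_iff.2 fun σ => ?_)
  · rw [sigBody_neg]
    exact sigBody_le_sigMax _ _ _
  · simpa [sigBody_neg] using sigBody_le_sigMax (fun j => -a j) r (fun j => !σ j)

lemma sigBody_snoc {n : ℕ} (a r : Fin (n + 1) → ℝ) (τ : Fin n → Bool) (b : Bool) :
    sigBody a r (Fin.snoc τ b) = boolSign b * a (Fin.last n) +
      sigBody (Fin.init a - boolSign b • Fin.init r) (Fin.init r) τ := by
  have hlast (j : Fin (n + 1)) : ¬Fin.last n < j := not_lt.2 (Fin.le_last j)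
  simp only [sigBody, Fin.init, Pi.sub_apply, Pi.smul_apply, smul_eq_mul, Fin.sum_univ_castSucc,
    Fin.snoc_castSucc, Fin.snoc_last, Fin.castSucc_lt_castSucc_iff, Fin.castSucc_lt_last, if_true,
    hlast, if_false, sum_const_zero, add_zero, mul_sub, sum_sub_distrib, sum_add_distrib, mul_assoc]
  ring

lemma sigMax_succ {n : ℕ} (a r : Fin (n + 1) → ℝ) :
    sigMax (n + 1) a r =
      max (a (Fin.last n) + sigMax n (Fin.init a - Fin.init r) (Fin.init r))
        (-a (Fin.last n) + sigMax n (Fin.init a + Fin.init r) (Fin.init r)) := by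
  refine eq_of_forall_ge_iff fun x => ?_
  have hsnoc : (∀ σ, sigBody a r σ ≤ x) ↔ ∀ τ b, sigBody a r (Fin.snoc τ b) ≤ x :=
    ⟨fun h τ b => h _, fun h σ => Fin.snoc_init_self σ ▸ h _ _⟩
  simp only [sigMax_le_iff, hsnoc, Bool.forall_bool, sigBody_snoc, max_le_iff, ← le_sub_iff_add_le',
    boolSign_true, boolSign_false, one_smul, neg_one_smul, one_mul, neg_one_mul, sub_neg_eq_add,
    forall_and]
  exact and_comm

theorem sigMax_natCast_mul_add_le (n m : ℕ) (r c : Fin n → ℝ) (C : ℝ) (hc0 : ∀ j, 0 ≤ c j)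
    (hc : Monotone c) (hcC : ∀ j, c j ≤ C) :
    sigMax n (fun j => m * r j + c j) r ≤
      sigMax n (fun j => m * r j - c j) r + 2 * (min m n : ℕ) * C := by
  induction n generalizing m C with
  | zero => simp [sigMax_zero]
  | succ n ih =>
    cases m with
    | zero => simpa [sub_eq_add_neg] using (sigMax_neg c r).ge
    | succ m =>
      have ih' (m' : ℕ) := ih m' (Fin.init r) (Fin.init c) (c (Fin.last n)) (fun j => hc0 _)
        (hc.comp Fin.strictMono_castSucc.monotone) (fun j => hc (Fin.le_last _))
      have h_dec :
          sigMax n (Fin.init (fun j => ((m + 1 : ℕ) : ℝ) * r j + c j) - Fin.init r) (Fin.init r) ≤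
            sigMax n (Fin.init (fun j => ((m + 1 : ℕ) : ℝ) * r j - c j) - Fin.init r) (Fin.init r) +
              2 * (min m n : ℕ) * c (Fin.last n) := by
        convert ih' m using 3 <;> (try funext j) <;> simp only [Fin.init, Pi.sub_apply] <;>
          push_cast <;> ring
      have h_inc :
          sigMax n (Fin.init (fun j => ((m + 1 : ℕ) : ℝ) * r j + c j) + Fin.init r) (Fin.init r) ≤
            sigMax n (Fin.init (fun j => ((m + 1 : ℕ) : ℝ) * r j - c j) + Fin.init r) (Fin.init r) +
              2 * (min (m + 2) n : ℕ) * c (Fin.last n) := by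
        convert ih' (m + 2) using 3 <;> (try funext j) <;> simp only [Fin.init, Pi.add_apply] <;>
          push_cast <;> ring
      -- Against the matching branch on the right, the `σ = +1` branch gains `2 c_last`, which
      -- `hcL` absorbs; the `σ = −1` branch loses `2 c_last`, which pays for the slack in `hmin`.
      have hcL : ((min m n : ℕ) + 1 : ℝ) * c (Fin.last n) ≤ ((min m n : ℕ) + 1) * C :=
        mul_le_mul_of_nonneg_left (hcC _) (by positivity)
      have hmin :
          ((min (m + 2) n : ℕ) : ℝ) * c (Fin.last n) ≤ ((min m n : ℕ) + 2) * c (Fin.last n) :=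
        mul_le_mul_of_nonneg_right (by norm_cast; omega) (hc0 _)
      rw [sigMax_succ, sigMax_succ, Nat.succ_min_succ, Nat.cast_add_one (min m n)]
      refine max_le ((?_ : _ ≤ _ + _).trans (add_le_add (le_max_left _ _) le_rfl))
        ((?_ : _ ≤ _ + _).trans (add_le_add (le_max_right _ _) le_rfl)) <;> linarith

lemma mul_sub_mul_eq (α β p q : ℝ) : α * p - β * q = α * (p - q) + (α - β) * q := by ring

lemma mul_sub_mul_nonneg {α β p q : ℝ} (hα : 0 ≤ α) (hβα : β ≤ α) (hq : 0 ≤ q) (hpq : 0 ≤ p - q) :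
    0 ≤ α * p - β * q := by
  rw [mul_sub_mul_eq]
  exact add_nonneg (mul_nonneg hα hpq) (mul_nonneg (sub_nonneg.2 hβα) hq)

lemma monotone_mul_sub_mul {ι : Type*} [Preorder ι] {p q : ι → ℝ} {α β : ℝ} (hα : 0 ≤ α)
    (hβα : β ≤ α) (hq : Monotone q) (hpq : Monotone fun j => p j - q j) :
    Monotone fun j => α * p j - β * q j := by
  simp only [mul_sub_mul_eq]
  exact (hpq.const_mul hα).add (hq.const_mul (sub_nonneg.2 hβα))

theorem backlund_key_inequality_general (N N' : ℕ)
    (p q : Fin (N + 1) → ℝ)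
    (hq0 : ∀ j, 0 ≤ q j) (hqmono : Monotone q)
    (hpq0 : ∀ j, 0 ≤ p j - q j) (hpqmono : Monotone fun j => p j - q j)
    (k l : ℝ)
    (r : Fin (N + 1) → ℝ) (hr : ∀ j, r j = k * p j + l * q j)
    (α β : ℝ) (hα0 : 0 ≤ α) (hβ2 : β ≤ α)
    (e : Fin N' → Fin (N + 1)) (he : ∀ j, (e j : ℕ) = (j : ℕ)) :
    sigMax N' (fun j => (k - α) * p (e j) + (l + β) * q (e j)) (fun j => r (e j)) ≥
      sigMax N' (fun j => (k + α) * p (e j) + (l - β) * q (e j)) (fun j => r (e j))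
        - 2 * α * p (Fin.last N) + 2 * β * q (Fin.last N) := by
  set c : Fin (N + 1) → ℝ := fun j => α * p j - β * q j with hc_def
  have hc0 (j : Fin (N + 1)) : 0 ≤ c j := mul_sub_mul_nonneg hα0 hβ2 (hq0 j) (hpq0 j)
  have hc : Monotone c := monotone_mul_sub_mul hα0 hβ2 hqmono hpqmono
  have he_mono : Monotone e := fun i j hij => by rw [Fin.le_def, he, he]; exact hij
  have key := sigMax_natCast_mul_add_le N' 1 (fun j => r (e j)) (fun j => c (e j)) (c (Fin.last N))
    (fun j => hc0 _) (hc.comp he_mono) (fun j => hc (Fin.le_last _))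
  have hmin : ((min 1 N' : ℕ) : ℝ) * c (Fin.last N) ≤ c (Fin.last N) :=
    mul_le_of_le_one_left (hc0 _) (by exact_mod_cast min_le_left 1 N')
  have h_add : (fun j => ((1 : ℕ) : ℝ) * r (e j) + c (e j)) =
      fun j => (k + α) * p (e j) + (l - β) * q (e j) := by
    funext j; rw [hr, hc_def]; push_cast; ring
  have h_sub : (fun j => ((1 : ℕ) : ℝ) * r (e j) - c (e j)) =
      fun j => (k - α) * p (e j) + (l + β) * q (e j) := by
    funext j; rw [hr, hc_def]; push_cast; ring
  rw [h_add, h_sub] at key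
  linarith

theorem backlund_key_inequality (N N' : ℕ) (hN : 1 ≤ N) (hN'1 : 1 ≤ N') (hN'N : N' ≤ N)
    (p q : Fin (N + 1) → ℝ)
    (hp0 : ∀ j, 0 ≤ p j) (hpmono : Monotone p)
    (hq0 : ∀ j, 0 ≤ q j) (hqmono : Monotone q)
    (hpq0 : ∀ j, 0 ≤ p j - q j) (hpqmono : Monotone fun j => p j - q j)
    (k l : ℝ) (hk : 0 ≤ k) (hl : 0 ≤ l)
    (r : Fin (N + 1) → ℝ) (hr : ∀ j, r j = k * p j + l * q j)
    (α β : ℝ) (hα0 : 0 ≤ α) (hαk : α ≤ k) (hβ1 : -k - l + α ≤ β) (hβ2 : β ≤ α)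
    (e : Fin N' → Fin (N + 1)) (he : ∀ j, (e j : ℕ) = (j : ℕ)) :
    sigMax N' (fun j => (k - α) * p (e j) + (l + β) * q (e j)) (fun j => r (e j)) ≥
      sigMax N' (fun j => (k + α) * p (e j) + (l - β) * q (e j)) (fun j => r (e j))
        - 2 * α * p (Fin.last N) + 2 * β * q (Fin.last N) :=
  backlund_key_inequality_general N N' p q hq0 hqmono hpq0 hpqmono k l r hr α β hα0 hβ2 e he
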